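/- arXiv:1006.1133 — 3 statements merged into one kernel-verified Lean document; each statement's English description precedes it below -/
import Mathlib

section
/- Let Ω = { x ∈ ℝ⁴ : x₄ > √(x₁²+x₂²+x₃²) } be the interior of the forward light cone and set τ(x) = √(x₄² − x₁² − x₂² − x₃²). Define U(x) = x / τ(x). Then η(U,U) = −1 on Ω, and for every real number k > 0 the triple (U, ρ, p) with ρ(x) = τ(x)^{−6k} and p = (2k−1)ρ satisfies both the relativistic Euler equations and the energy conservation equation along flow lines on Ω. (Generalized Hwa–Bjorken flow of Example 3.1.) -/
/-!
On the forward light cone `τ = √(-η(x,x))` has Minkowski gradient `-U` and derivative `1`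
along `U`, while `U = x/τ` is homogeneous of degree `0`, so `U·∂U = 0`: the flow is inertial.
A pressure that depends on `τ` alone therefore has gradient parallel to `U`, which the
projection `v ↦ v + η(v,U) U` orthogonal to `U` annihilates; this gives the Euler equations
for every density. Since `div U = 3/τ` and `U·∂ρ = ρ'(τ)`, energy conservation for `ρ, p`
depending on `τ` reduces to the ODE `3(ρ + p) + τ ρ' = 0`, solved by `ρ = τ^{-6k}`,
`p = (2k-1)ρ`.
-/

open scoped BigOperators

noncomputable section

/-- Coefficients of the Minkowski metric `diag(1,1,1,−1)`
(the fourth coordinate, index `3`, is timelike). -/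
def etaCoef : Fin 4 → ℝ := fun μ => if μ = 3 then -1 else 1

/-- The Minkowski bilinear form on `ℝ⁴`: `η(v,w) = v₁w₁ + v₂w₂ + v₃w₃ − v₄w₄`. -/
def eta (v w : Fin 4 → ℝ) : ℝ := ∑ μ, etaCoef μ * v μ * w μ

/-- The components `η_{μν} = diag(1,1,1,−1)` of the Minkowski metric. -/
def etaMat (μ ν : Fin 4) : ℝ := if μ = ν then etaCoef μ else 0

/-- The partial derivative `∂_μ f (x)`. -/
def pd (μ : Fin 4) (f : (Fin 4 → ℝ) → ℝ) (x : Fin 4 → ℝ) : ℝ :=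
  fderiv ℝ f x (Pi.single μ 1)

/-- The Minkowski gradient `grad p = (∂₁p, ∂₂p, ∂₃p, −∂₄p)`. -/
def mgrad (p : (Fin 4 → ℝ) → ℝ) (x : Fin 4 → ℝ) : Fin 4 → ℝ :=
  fun ν => etaCoef ν * pd ν p x

/-- The relativistic Euler equations for the triple `(U, ρ, p)` on `Ω`:
`(ρ+p)·Σ_μ U^μ ∂_μ U^ν + (grad p)^ν + η(grad p, U)·U^ν = 0`. -/
def EulerEqs (Ω : Set (Fin 4 → ℝ)) (U : (Fin 4 → ℝ) → Fin 4 → ℝ)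
    (ρ p : (Fin 4 → ℝ) → ℝ) : Prop :=
  ∀ x ∈ Ω, ∀ ν : Fin 4,
    (ρ x + p x) * (∑ μ, U x μ * pd μ (fun y => U y ν) x)
      + mgrad p x ν + eta (mgrad p x) (U x) * U x ν = 0

/-- Conservation of energy along flow lines:
`(ρ+p)·Σ_μ ∂_μ U^μ + Σ_μ U^μ ∂_μ ρ = 0` on `Ω`. -/
def EnergyCons (Ω : Set (Fin 4 → ℝ)) (U : (Fin 4 → ℝ) → Fin 4 → ℝ)
    (ρ p : (Fin 4 → ℝ) → ℝ) : Prop :=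
  ∀ x ∈ Ω,
    (ρ x + p x) * (∑ μ, pd μ (fun y => U y μ) x) + (∑ μ, U x μ * pd μ ρ x) = 0

/-- The interior of the forward light cone in Minkowski `ℝ⁴`. -/
def lightcone : Set (Fin 4 → ℝ) :=
  {x | Real.sqrt ((x 0) ^ 2 + (x 1) ^ 2 + (x 2) ^ 2) < x 3}

/-- `τ(x) = √(x₄² − x₁² − x₂² − x₃²)`. -/
def tau (x : Fin 4 → ℝ) : ℝ :=
  Real.sqrt ((x 3) ^ 2 - (x 0) ^ 2 - (x 1) ^ 2 - (x 2) ^ 2)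

/-- The extended Hwa–Bjorken flow vector field `U(x) = x / τ(x)`. -/
def Ubj (x : Fin 4 → ℝ) : Fin 4 → ℝ := fun μ => x μ / tau x

lemma sum_mul_pd (f : (Fin 4 → ℝ) → ℝ) (x v : Fin 4 → ℝ) :
    ∑ μ, v μ * pd μ f x = fderiv ℝ f x v := by
  conv_rhs => rw [pi_eq_sum_univ' v]
  simp only [map_sum, map_smul, pd, smul_eq_mul]

lemma etaCoef_mul_self (μ : Fin 4) : etaCoef μ * etaCoef μ = 1 := by
  unfold etaCoef; split_ifs <;> norm_num

lemma eta_smul_left (c : ℝ) (v w : Fin 4 → ℝ) : eta (c • v) w = c * eta v w := by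
  simp only [eta, Finset.mul_sum, Pi.smul_apply, smul_eq_mul]
  exact Finset.sum_congr rfl fun _ _ => by ring

lemma eta_comm (v w : Fin 4 → ℝ) : eta v w = eta w v := by
  simp only [eta, mul_right_comm]

lemma eta_single_right (v : Fin 4 → ℝ) (ν : Fin 4) :
    eta v (Pi.single ν 1) = etaCoef ν * v ν := by
  simp [eta, Pi.single_apply]

lemma smul_add_eta_smul_self (U : Fin 4 → ℝ) (hU : eta U U = -1) (c : ℝ) (ν : Fin 4) :
    (c • U) ν + eta (c • U) U * U ν = 0 := by
  rw [eta_smul_left, hU, Pi.smul_apply, smul_eq_mul]; ring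

lemma tau_eq_sqrt_neg_eta (x : Fin 4 → ℝ) : tau x = Real.sqrt (-eta x x) := by
  simp [tau, eta, Fin.sum_univ_four, etaCoef]
  ring_nf

def etaCLM (x : Fin 4 → ℝ) : (Fin 4 → ℝ) →L[ℝ] ℝ :=
  ∑ μ, (etaCoef μ * x μ) • ContinuousLinearMap.proj μ

@[simp] lemma etaCLM_apply (x v : Fin 4 → ℝ) : etaCLM x v = eta x v := by
  simp [etaCLM, eta]

lemma hasFDerivAt_eta_self (x : Fin 4 → ℝ) :
    HasFDerivAt (fun y => eta y y) ((2 : ℝ) • etaCLM x) x := by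
  have hproj (μ : Fin 4) : HasFDerivAt (fun y : Fin 4 → ℝ => y μ)
      (ContinuousLinearMap.proj μ : (Fin 4 → ℝ) →L[ℝ] ℝ) x := hasFDerivAt_apply μ x
  have hterm (μ : Fin 4) := ((hproj μ).const_mul (etaCoef μ)).mul (hproj μ)
  refine (HasFDerivAt.fun_sum fun μ _ => hterm μ).congr_fderiv ?_
  ext v
  simp [eta, Finset.mul_sum]
  exact Finset.sum_congr rfl fun _ _ => by ring

lemma Ubj_eq_smul (x : Fin 4 → ℝ) : Ubj x = (tau x)⁻¹ • x := by
  ext μ; simp [Ubj, div_eq_inv_mul]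

section LightCone

variable {x : Fin 4 → ℝ}

lemma neg_eta_self_pos (hx : x ∈ lightcone) : 0 < -eta x x := by
  have hx3 : 0 < x 3 := (Real.sqrt_nonneg _).trans_lt hx
  have := (Real.sqrt_lt' hx3).mp hx
  simp [eta, Fin.sum_univ_four, etaCoef]
  linarith

lemma tau_pos (hx : x ∈ lightcone) : 0 < tau x := by
  rw [tau_eq_sqrt_neg_eta]; exact Real.sqrt_pos.mpr (neg_eta_self_pos hx)

lemma eta_self_eq_neg_tau_sq (hx : x ∈ lightcone) : eta x x = -tau x ^ 2 := by
  rw [tau_eq_sqrt_neg_eta, Real.sq_sqrt (neg_eta_self_pos hx).le, neg_neg]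

lemma eta_Ubj_self (hx : x ∈ lightcone) : eta (Ubj x) (Ubj x) = -1 := by
  have := (tau_pos hx).ne'
  rw [Ubj_eq_smul, eta_smul_left, eta_comm, eta_smul_left, eta_self_eq_neg_tau_sq hx]
  field_simp

lemma hasFDerivAt_tau (hx : x ∈ lightcone) :
    HasFDerivAt tau (-(tau x)⁻¹ • etaCLM x) x := by
  have hq : HasFDerivAt (fun y => -eta y y) (-((2 : ℝ) • etaCLM x)) x :=
    (hasFDerivAt_eta_self x).neg
  have h := hq.sqrt (neg_eta_self_pos hx).ne'
  simp only [← tau_eq_sqrt_neg_eta] at h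
  refine h.congr_fderiv ?_
  ext v
  simp
  ring

lemma fderiv_tau_apply (hx : x ∈ lightcone) (v : Fin 4 → ℝ) :
    fderiv ℝ tau x v = -eta x v / tau x := by
  simp [(hasFDerivAt_tau hx).fderiv, div_eq_inv_mul]

lemma fderiv_tau_self (hx : x ∈ lightcone) : fderiv ℝ tau x x = tau x := by
  have := (tau_pos hx).ne'
  rw [fderiv_tau_apply hx, eta_self_eq_neg_tau_sq hx]
  field_simp

lemma fderiv_tau_Ubj (hx : x ∈ lightcone) : fderiv ℝ tau x (Ubj x) = 1 := by
  have := (tau_pos hx).ne'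
  rw [Ubj_eq_smul, map_smul, fderiv_tau_self hx, smul_eq_mul, inv_mul_cancel₀ this]

lemma mgrad_tau (hx : x ∈ lightcone) : mgrad tau x = -Ubj x := by
  ext ν
  rw [mgrad, pd, fderiv_tau_apply hx, eta_single_right, Pi.neg_apply, Ubj]
  linear_combination (-(x ν) / tau x) * etaCoef_mul_self ν

lemma hasFDerivAt_comp_tau (hx : x ∈ lightcone) {g : ℝ → ℝ} {g' : ℝ}
    (hg : HasDerivAt g g' (tau x)) :
    HasFDerivAt (fun y => g (tau y)) (g' • fderiv ℝ tau x) x :=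
  hg.comp_hasFDerivAt x (hasFDerivAt_tau hx).differentiableAt.hasFDerivAt

lemma fderiv_Ubj_apply (hx : x ∈ lightcone) (ν : Fin 4) (v : Fin 4 → ℝ) :
    fderiv ℝ (fun y => Ubj y ν) x v = (v ν - x ν * fderiv ℝ tau x v / tau x) / tau x := by
  have ht := (tau_pos hx).ne'
  have hproj : HasFDerivAt (fun y : Fin 4 → ℝ => y ν)
      (ContinuousLinearMap.proj ν : (Fin 4 → ℝ) →L[ℝ] ℝ) x := hasFDerivAt_apply ν x
  have h := hproj.fun_mul (hasFDerivAt_comp_tau hx (hasDerivAt_inv ht))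
  rw [show (fun y => Ubj y ν) = fun y => y ν * (tau y)⁻¹ from rfl, h.fderiv]
  simp
  field_simp
  ring

lemma sum_Ubj_mul_pd_Ubj (hx : x ∈ lightcone) (ν : Fin 4) :
    ∑ μ, Ubj x μ * pd μ (fun y => Ubj y ν) x = 0 := by
  rw [sum_mul_pd, fderiv_Ubj_apply hx, fderiv_tau_Ubj hx, Ubj, mul_one, sub_self, zero_div]

lemma sum_pd_Ubj (hx : x ∈ lightcone) :
    ∑ μ, pd μ (fun y => Ubj y μ) x = 3 / tau x := by
  have ht := (tau_pos hx).ne'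
  have hx_tau : ∑ μ, x μ * pd μ tau x = tau x := by rw [sum_mul_pd, fderiv_tau_self hx]
  simp only [pd, fderiv_Ubj_apply hx, Pi.single_eq_same] at hx_tau ⊢
  rw [Fin.sum_univ_four] at hx_tau ⊢
  field_simp
  linear_combination -hx_tau

lemma pd_comp_tau (hx : x ∈ lightcone) {g : ℝ → ℝ} {g' : ℝ}
    (hg : HasDerivAt g g' (tau x)) (μ : Fin 4) :
    pd μ (fun y => g (tau y)) x = g' * pd μ tau x := by
  rw [pd, (hasFDerivAt_comp_tau hx hg).fderiv]; rfl

lemma sum_Ubj_mul_pd_comp_tau (hx : x ∈ lightcone) {g : ℝ → ℝ} {g' : ℝ}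
    (hg : HasDerivAt g g' (tau x)) :
    ∑ μ, Ubj x μ * pd μ (fun y => g (tau y)) x = g' := by
  simp only [pd_comp_tau hx hg, mul_left_comm _ g', ← Finset.mul_sum, sum_mul_pd,
    fderiv_tau_Ubj hx, mul_one]

lemma mgrad_comp_tau (hx : x ∈ lightcone) {g : ℝ → ℝ} {g' : ℝ}
    (hg : HasDerivAt g g' (tau x)) :
    mgrad (fun y => g (tau y)) x = -g' • Ubj x := by
  ext ν
  have hν := congrFun (mgrad_tau hx) ν
  simp only [mgrad] at hν
  rw [mgrad, pd_comp_tau hx hg, mul_left_comm, hν, Pi.smul_apply, Pi.neg_apply, smul_eq_mul,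
    neg_mul, mul_neg]

end LightCone

theorem eulerEqs_comp_tau (ρ : (Fin 4 → ℝ) → ℝ) {g g' : ℝ → ℝ}
    (hg : ∀ t, 0 < t → HasDerivAt g (g' t) t) :
    EulerEqs lightcone Ubj ρ (fun y => g (tau y)) := by
  intro x hx ν
  rw [sum_Ubj_mul_pd_Ubj hx, mul_zero, zero_add,
    mgrad_comp_tau hx (hg _ (tau_pos hx))]
  exact smul_add_eta_smul_self _ (eta_Ubj_self hx) _ ν

theorem energyCons_comp_tau {f f' g : ℝ → ℝ} (hf : ∀ t, 0 < t → HasDerivAt f (f' t) t)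
    (hode : ∀ t, 0 < t → 3 * (f t + g t) + t * f' t = 0) :
    EnergyCons lightcone Ubj (fun y => f (tau y)) (fun y => g (tau y)) := by
  intro x hx
  have ht := tau_pos hx
  rw [sum_pd_Ubj hx, sum_Ubj_mul_pd_comp_tau hx (hf _ ht)]
  field_simp
  linear_combination hode _ ht

/-- the extended Hwa–Bjorken flow `U = x/τ` with
`ρ = τ^{−6k}`, `p = (2k−1)ρ` solves the relativistic Euler equations and the
energy conservation equation on the interior of the forward light cone. -/
theorem statement7 :
    (∀ x ∈ lightcone, eta (Ubj x) (Ubj x) = -1) ∧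
    ∀ k : ℝ, 0 < k →
      EulerEqs lightcone Ubj (fun x => tau x ^ (-(6 * k)))
        (fun x => (2 * k - 1) * tau x ^ (-(6 * k))) ∧
      EnergyCons lightcone Ubj (fun x => tau x ^ (-(6 * k)))
        (fun x => (2 * k - 1) * tau x ^ (-(6 * k))) := by
  refine ⟨fun x hx => eta_Ubj_self hx, fun k _ => ⟨?_, ?_⟩⟩
  · exact eulerEqs_comp_tau _ fun t ht =>
      ((Real.hasDerivAt_rpow_const (p := -(6 * k)) (Or.inl ht.ne')).const_mul (2 * k - 1))
  · refine energyCons_comp_tau (f := fun t => t ^ (-(6 * k)))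
      (g := fun t => (2 * k - 1) * t ^ (-(6 * k)))
      (fun t ht => Real.hasDerivAt_rpow_const (Or.inl ht.ne')) fun t ht => ?_
    rw [Real.rpow_sub_one ht.ne']
    field_simp
    ring
end
end

section
/- Let Ω ⊆ ℝ⁴ be open, φ : Ω → ℝ³ smooth, and U : Ω → ℝ⁴ smooth with η(U,U) = −1 and Σ_α U^α ∂_α φ^a = 0 for a = 1,2,3. Set ω_μ = Σ_α η_{μα}U^α and g^H_{μν} = η_{μν} + ω_μ ω_ν, and suppose φ is horizontally conformal: there is a function λ : Ω → (0,∞) with Σ_{a=1}^{3} ∂_μ φ^a ∂_ν φ^a = λ² · g^H_{μν} on Ω for all μ, ν. Then U is shear-free: (ℒ_U g^H)_{μν} = (2/3)·(Σ_α ∂_α U^α)·g^H_{μν} on Ω for all μ, ν. -/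
open scoped BigOperators

noncomputable section

/-- Componentwise Lie derivative of a symmetric 2-tensor `T` along `U`:
`(ℒ_U T)_{μν} = Σ_α ( U^α ∂_α T_{μν} + ∂_μ U^α · T_{αν} + ∂_ν U^α · T_{μα} )`. -/
def lieD (U : (Fin 4 → ℝ) → Fin 4 → ℝ) (T : (Fin 4 → ℝ) → Fin 4 → Fin 4 → ℝ)
    (x : Fin 4 → ℝ) (μ ν : Fin 4) : ℝ :=
  ∑ α, (U x α * pd α (fun y => T y μ ν) x
        + pd μ (fun y => U y α) x * T x α ν
        + pd ν (fun y => U y α) x * T x μ α)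

/-- The pullback `φ*h` of the Euclidean metric of `ℝ³`. -/
def pullb (φ : (Fin 4 → ℝ) → Fin 3 → ℝ) (x : Fin 4 → ℝ) (μ ν : Fin 4) : ℝ :=
  ∑ a, pd μ (fun y => φ y a) x * pd ν (fun y => φ y a) x

/-- The horizontal part `g^H = η + ω ⊗ ω` of the Minkowski metric determined
by the unit timelike vector field `U`, where `ω_μ = Σ_α η_{μα} U^α`. -/
def gHU (U : (Fin 4 → ℝ) → Fin 4 → ℝ) (x : Fin 4 → ℝ) (μ ν : Fin 4) : ℝ :=
  etaMat μ ν + (etaCoef μ * U x μ) * (etaCoef ν * U x ν)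

/-!
Differentiating the verticality condition `U φᵃ = 0` gives `ℒ_U (φ*h) = 0`, since in coordinates
`ℒ_U (dφᵃ ⊗ dφᵃ) = d(U φᵃ) ⊗ dφᵃ + dφᵃ ⊗ d(U φᵃ)`. Near each point `φ*h = L · g^H` with the smooth
function `L = tr_η (φ*h) / 3 = λ²`, so `0 = (U L) · g^H + L · ℒ_U g^H` and `ℒ_U g^H` is a multiple
of `g^H`. Because `η(U, U) = -1`, the η-traces are `tr_η g^H = 3` and `tr_η ℒ_U g^H = 2 div U`,
which fixes the multiple as `(2/3) div U`.
-/

open Filter Topology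

section PartialDerivatives

variable {f g : (Fin 4 → ℝ) → ℝ} {x : Fin 4 → ℝ}

lemma pd_congr_of_eventuallyEq (h : f =ᶠ[𝓝 x] g) (μ : Fin 4) : pd μ f x = pd μ g x := by
  unfold pd
  rw [h.fderiv_eq]

lemma pd_eq_zero_of_eventuallyEq_const {c : ℝ} (h : f =ᶠ[𝓝 x] fun _ => c) (μ : Fin 4) :
    pd μ f x = 0 := by
  rw [pd_congr_of_eventuallyEq h, pd, fderiv_fun_const]
  rfl

lemma pd_mul (hf : DifferentiableAt ℝ f x) (hg : DifferentiableAt ℝ g x) (μ : Fin 4) :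
    pd μ (fun y => f y * g y) x = pd μ f x * g x + f x * pd μ g x := by
  unfold pd
  rw [fderiv_fun_mul hf hg, add_apply, smul_apply, smul_apply, smul_eq_mul, smul_eq_mul]
  ring

lemma pd_const_mul (hf : DifferentiableAt ℝ f x) (c : ℝ) (μ : Fin 4) :
    pd μ (fun y => c * f y) x = c * pd μ f x := by
  unfold pd
  rw [fderiv_const_mul hf, smul_apply, smul_eq_mul]

lemma pd_const_add (c : ℝ) (μ : Fin 4) : pd μ (fun y => c + f y) x = pd μ f x := by
  unfold pd
  rw [fderiv_const_add]

lemma pd_sum {ι : Type*} (s : Finset ι) {F : ι → (Fin 4 → ℝ) → ℝ}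
    (h : ∀ i ∈ s, DifferentiableAt ℝ (F i) x) (μ : Fin 4) :
    pd μ (fun y => ∑ i ∈ s, F i y) x = ∑ i ∈ s, pd μ (F i) x := by
  unfold pd
  rw [fderiv_fun_sum h]
  simp

lemma differentiableAt_fderiv_of_contDiffAt_two (hf : ContDiffAt ℝ 2 f x) :
    DifferentiableAt ℝ (fderiv ℝ f) x :=
  (hf.fderiv_right (m := 1) le_rfl).differentiableAt one_ne_zero

lemma differentiableAt_pd (hf : ContDiffAt ℝ 2 f x) (μ : Fin 4) :
    DifferentiableAt ℝ (pd μ f) x :=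
  (differentiableAt_fderiv_of_contDiffAt_two hf).clm_apply (differentiableAt_const _)

lemma pd_pd (hf : ContDiffAt ℝ 2 f x) (α μ : Fin 4) :
    pd α (pd μ f) x = fderiv ℝ (fderiv ℝ f) x (Pi.single α 1) (Pi.single μ 1) := by
  change fderiv ℝ (fun y => fderiv ℝ f y (Pi.single μ 1)) x (Pi.single α 1) = _
  rw [fderiv_clm_apply (differentiableAt_fderiv_of_contDiffAt_two hf) (differentiableAt_const _)]
  simp

lemma pd_pd_comm (hf : ContDiffAt ℝ 2 f x) (α μ : Fin 4) :
    pd α (pd μ f) x = pd μ (pd α f) x := by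
  rw [pd_pd hf, pd_pd hf]
  exact (hf.isSymmSndFDerivAt (by rw [minSmoothness_of_isRCLikeNormedField])).eq _ _

end PartialDerivatives

section LieDerivative

variable {U : (Fin 4 → ℝ) → Fin 4 → ℝ} {x : Fin 4 → ℝ}

lemma lieD_congr_of_eventuallyEq {T T' : (Fin 4 → ℝ) → Fin 4 → Fin 4 → ℝ}
    (h : T =ᶠ[𝓝 x] T') (μ ν : Fin 4) : lieD U T x μ ν = lieD U T' x μ ν := by
  have hcomp : ∀ μ ν, (fun y => T y μ ν) =ᶠ[𝓝 x] fun y => T' y μ ν :=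
    fun μ ν => h.mono fun y hy => congrFun (congrFun hy μ) ν
  simp only [lieD, pd_congr_of_eventuallyEq (hcomp _ _), h.eq_of_nhds]

lemma lieD_mul {f : (Fin 4 → ℝ) → ℝ} {T : (Fin 4 → ℝ) → Fin 4 → Fin 4 → ℝ}
    (hf : DifferentiableAt ℝ f x) (hT : ∀ μ ν, DifferentiableAt ℝ (fun y => T y μ ν) x)
    (μ ν : Fin 4) :
    lieD U (fun y μ ν => f y * T y μ ν) x μ ν
      = (∑ α, U x α * pd α f x) * T x μ ν + f x * lieD U T x μ ν := by
  rw [lieD, lieD, Finset.sum_mul, Finset.mul_sum, ← Finset.sum_add_distrib]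
  refine Finset.sum_congr rfl fun α _ => ?_
  rw [pd_mul hf (hT μ ν)]
  ring

lemma lieD_sum {ι : Type*} (s : Finset ι) {T : ι → (Fin 4 → ℝ) → Fin 4 → Fin 4 → ℝ}
    (hT : ∀ i ∈ s, ∀ μ ν, DifferentiableAt ℝ (fun y => T i y μ ν) x) (μ ν : Fin 4) :
    lieD U (fun y μ ν => ∑ i ∈ s, T i y μ ν) x μ ν = ∑ i ∈ s, lieD U (T i) x μ ν := by
  unfold lieD
  rw [Finset.sum_comm]
  refine Finset.sum_congr rfl fun α _ => ?_
  rw [pd_sum s fun i hi => hT i hi μ ν, Finset.mul_sum, Finset.mul_sum, Finset.mul_sum,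
    ← Finset.sum_add_distrib, ← Finset.sum_add_distrib]

lemma lieD_pd_mul_pd {f : (Fin 4 → ℝ) → ℝ} (hf : ContDiffAt ℝ 2 f x)
    (hU : ∀ α, DifferentiableAt ℝ (fun y => U y α) x) (μ ν : Fin 4) :
    lieD U (fun y μ ν => pd μ f y * pd ν f y) x μ ν
      = pd μ (fun y => ∑ α, U y α * pd α f y) x * pd ν f x
        + pd μ f x * pd ν (fun y => ∑ α, U y α * pd α f y) x := by
  have hdf := differentiableAt_pd hf
  have hpd_Uf (κ : Fin 4) := pd_sum (F := fun α y => U y α * pd α f y) Finset.univ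
    (fun α _ => (hU α).mul (hdf α)) κ
  rw [hpd_Uf, hpd_Uf, Finset.sum_mul, Finset.mul_sum, ← Finset.sum_add_distrib, lieD]
  refine Finset.sum_congr rfl fun α _ => ?_
  rw [pd_mul (hdf μ) (hdf ν), pd_mul (hU α) (hdf α), pd_mul (hU α) (hdf α),
    pd_pd_comm hf μ α, pd_pd_comm hf ν α]
  ring

lemma lieD_pullb_eq_zero {φ : (Fin 4 → ℝ) → Fin 3 → ℝ} (hφ : ContDiffAt ℝ 2 φ x)
    (hU : ∀ α, DifferentiableAt ℝ (fun y => U y α) x)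
    (hvert : ∀ᶠ y in 𝓝 x, ∀ a, ∑ α, U y α * pd α (fun z => φ z a) y = 0) (μ ν : Fin 4) :
    lieD U (pullb φ) x μ ν = 0 := by
  have hφa (a : Fin 3) : ContDiffAt ℝ 2 (fun y => φ y a) x := contDiffAt_pi.1 hφ a
  have hdUφ (a : Fin 3) (κ : Fin 4) :
      pd κ (fun y => ∑ α, U y α * pd α (fun z => φ z a) y) x = 0 :=
    pd_eq_zero_of_eventuallyEq_const (hvert.mono fun y hy => hy a) κ
  change lieD U (fun y μ ν => ∑ a, pd μ (fun z => φ z a) y * pd ν (fun z => φ z a) y) x μ ν = 0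
  rw [lieD_sum (T := fun a y μ ν => pd μ (fun z => φ z a) y * pd ν (fun z => φ z a) y) _
    fun a _ μ ν => (differentiableAt_pd (hφa a) μ).mul (differentiableAt_pd (hφa a) ν)]
  refine Finset.sum_eq_zero fun a _ => ?_
  rw [lieD_pd_mul_pd (hφa a) hU, hdUφ, hdUφ, zero_mul, mul_zero, add_zero]

end LieDerivative

def etaTrace (T : Fin 4 → Fin 4 → ℝ) : ℝ := ∑ κ, etaCoef κ * T κ κ

lemma etaTrace_const_mul (c : ℝ) (T : Fin 4 → Fin 4 → ℝ) :
    etaTrace (fun μ ν => c * T μ ν) = c * etaTrace T := by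
  simp only [etaTrace, mul_left_comm _ c, ← Finset.mul_sum]

lemma eq_etaTrace_div_mul_of_add_eq_zero {G Λ : Fin 4 → Fin 4 → ℝ} {a L : ℝ} (hL : L ≠ 0)
    (hG : etaTrace G ≠ 0) (h : ∀ μ ν, a * G μ ν + L * Λ μ ν = 0) (μ ν : Fin 4) :
    Λ μ ν = etaTrace Λ / etaTrace G * G μ ν := by
  have hΛ : Λ = fun μ ν => -(a / L) * G μ ν :=
    funext₂ fun μ ν => by field_simp; linear_combination h μ ν
  rw [hΛ, etaTrace_const_mul]
  field_simp

section HorizontalMetric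

variable {U : (Fin 4 → ℝ) → Fin 4 → ℝ} {x : Fin 4 → ℝ}

lemma differentiableAt_gHU (hU : ∀ α, DifferentiableAt ℝ (fun y => U y α) x) (μ ν : Fin 4) :
    DifferentiableAt ℝ (fun y => gHU U y μ ν) x :=
  (differentiableAt_const _).add (((hU μ).const_mul _).mul ((hU ν).const_mul _))

lemma etaTrace_gHU (hunit : eta (U x) (U x) = -1) : etaTrace (gHU U x) = 3 := by
  simp only [eta, Fin.sum_univ_four] at hunit
  simp only [etaTrace, gHU, etaMat, etaCoef, Fin.sum_univ_four, Fin.isValue, Fin.reduceEq,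
    ↓reduceIte] at hunit ⊢
  linear_combination hunit

lemma etaTrace_lieD_gHU (hU : ∀ α, DifferentiableAt ℝ (fun y => U y α) x)
    (hunit : ∀ᶠ y in 𝓝 x, eta (U y) (U y) = -1) :
    etaTrace (lieD U (gHU U) x) = 2 * ∑ α, pd α (fun y => U y α) x := by
  have horth (α : Fin 4) : ∑ κ, etaCoef κ * U x κ * pd α (fun y => U y κ) x = 0 := by
    have h := pd_eq_zero_of_eventuallyEq_const hunit α
    unfold eta at h
    rw [pd_sum (F := fun κ y => etaCoef κ * U y κ * U y κ) _
      fun κ _ => ((hU κ).const_mul _).mul (hU κ)] at h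
    simp only [pd_mul ((hU _).const_mul _) (hU _), pd_const_mul (hU _), Fin.sum_univ_four] at h
    simp only [Fin.sum_univ_four]
    linear_combination h / 2
  have hpd_gHU (α μ ν : Fin 4) : pd α (fun y => gHU U y μ ν) x
      = etaCoef μ * pd α (fun y => U y μ) x * (etaCoef ν * U x ν)
        + etaCoef μ * U x μ * (etaCoef ν * pd α (fun y => U y ν) x) := by
    unfold gHU
    rw [pd_const_add, pd_mul ((hU μ).const_mul _) ((hU ν).const_mul _),
      pd_const_mul (hU μ), pd_const_mul (hU ν)]
  simp only [etaCoef, Fin.sum_univ_four, Fin.isValue, Fin.reduceEq, ↓reduceIte] at horth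
  simp only [etaTrace, lieD, hpd_gHU]
  simp only [gHU, etaMat, etaCoef, Fin.sum_univ_four, Fin.isValue, Fin.reduceEq, ↓reduceIte]
  linear_combination 4 * U x 0 * horth 0 + 4 * U x 1 * horth 1 + 4 * U x 2 * horth 2
    + 4 * U x 3 * horth 3

end HorizontalMetric

/-- A smooth expression for the squared dilation `λ²` (`lam` itself need not be differentiable). -/
def confFactor (φ : (Fin 4 → ℝ) → Fin 3 → ℝ) (y : Fin 4 → ℝ) : ℝ := etaTrace (pullb φ y) / 3

lemma confFactor_eq {φ : (Fin 4 → ℝ) → Fin 3 → ℝ} {U : (Fin 4 → ℝ) → Fin 4 → ℝ}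
    {y : Fin 4 → ℝ} {c : ℝ} (hunit : eta (U y) (U y) = -1)
    (h : ∀ μ ν, pullb φ y μ ν = c * gHU U y μ ν) : confFactor φ y = c := by
  rw [confFactor, funext₂ h, etaTrace_const_mul, etaTrace_gHU hunit]
  ring

lemma differentiableAt_confFactor {φ : (Fin 4 → ℝ) → Fin 3 → ℝ} {x : Fin 4 → ℝ}
    (hφ : ContDiffAt ℝ 2 φ x) : DifferentiableAt ℝ (confFactor φ) x := by
  have hd (κ : Fin 4) (a : Fin 3) : DifferentiableAt ℝ (pd κ fun z => φ z a) x :=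
    differentiableAt_pd (contDiffAt_pi.1 hφ a) κ
  unfold confFactor etaTrace pullb
  fun_prop

/-- a horizontally conformal submersion with unit timelike
vertical vector field `U` has shear-free `U`: `ℒ_U g^H = (2/3)(div U)·g^H`. -/
theorem statement18 (Ω : Set (Fin 4 → ℝ)) (hΩ : IsOpen Ω)
    (φ : (Fin 4 → ℝ) → Fin 3 → ℝ) (U : (Fin 4 → ℝ) → Fin 4 → ℝ)
    (hφ : ContDiffOn ℝ (⊤ : ℕ∞) φ Ω) (hUsm : ContDiffOn ℝ (⊤ : ℕ∞) U Ω)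
    (hUnit : ∀ x ∈ Ω, eta (U x) (U x) = -1)
    (hvert : ∀ x ∈ Ω, ∀ a : Fin 3, ∑ α, U x α * pd α (fun y => φ y a) x = 0)
    (lam : (Fin 4 → ℝ) → ℝ) (hlam : ∀ x ∈ Ω, 0 < lam x)
    (hconf : ∀ x ∈ Ω, ∀ μ ν : Fin 4,
      pullb φ x μ ν = lam x ^ 2 * gHU U x μ ν) :
    ∀ x ∈ Ω, ∀ μ ν : Fin 4,
      lieD U (gHU U) x μ ν
        = (2 / 3) * (∑ α, pd α (fun y => U y α) x) * gHU U x μ ν := by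
  intro x hx μ ν
  have hΩx : ∀ᶠ y in 𝓝 x, y ∈ Ω := hΩ.mem_nhds hx
  have hφx : ContDiffAt ℝ 2 φ x := (hφ.contDiffAt hΩx).of_le (WithTop.coe_le_coe.2 le_top)
  have hUx (α : Fin 4) : DifferentiableAt ℝ (fun y => U y α) x :=
    (contDiffAt_pi.1 (hUsm.contDiffAt hΩx) α).differentiableAt (by simp)
  have hconfFactor : ∀ y ∈ Ω, confFactor φ y = lam y ^ 2 :=
    fun y hy => confFactor_eq (hUnit y hy) (hconf y hy)
  have hpullb : pullb φ =ᶠ[𝓝 x] fun y μ ν => confFactor φ y * gHU U y μ ν :=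
    hΩx.mono fun y hy => funext₂ fun μ ν => by
      dsimp only
      rw [hconf y hy, hconfFactor y hy]
  have hlie (μ ν : Fin 4) : (∑ α, U x α * pd α (confFactor φ) x) * gHU U x μ ν
      + confFactor φ x * lieD U (gHU U) x μ ν = 0 := by
    rw [← lieD_mul (differentiableAt_confFactor hφx) (differentiableAt_gHU hUx),
      ← lieD_congr_of_eventuallyEq hpullb, lieD_pullb_eq_zero hφx hUx (hΩx.mono hvert)]
  have hLx : confFactor φ x ≠ 0 := by
    rw [hconfFactor x hx]
    exact (pow_pos (hlam x hx) 2).ne'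
  have htrace := etaTrace_gHU (hUnit x hx)
  rw [eq_etaTrace_div_mul_of_add_eq_zero hLx (by norm_num [htrace]) hlie,
    etaTrace_lieD_gHU hUx (hΩx.mono hUnit), htrace]
  ring
end
end

section
/- Let Ω = { x ∈ ℝ⁴ : x₄ > √(x₁²+x₂²+x₃²) }, τ(x) = √(x₄² − x₁² − x₂² − x₃²), and define ψ : Ω → ℝ⁴ by ψ(x) = ( τ(x)/x₄, x₁/x₄, x₂/x₄, x₃/x₄ ). Then ψ takes values in the unit sphere S³ ⊂ ℝ⁴ (Σ_a ψ^a(x)² = 1), the radial vector field U(x) = x/τ(x) is vertical for ψ (Σ_α U^α ∂_α ψ^a = 0 for all a), and ψ is horizontally conformal with dilation λ² = x₄^{−2}: Σ_{a=1}^{4} ∂_μ ψ^a · ∂_ν ψ^a = x₄^{−2} · ( η_{μν} + ω_μ ω_ν ) on Ω for all μ, ν, where ω_μ = Σ_α η_{μα} x^α / τ. (This is the co-rotational map to S³ with profile β = arcsin(r/x₄) of Example 3.1.) -/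
open scoped BigOperators

noncomputable section

/-- The η-dual 1-form of `Ubj`: `ω_μ = Σ_α η_{μα} x^α / τ`. -/
def omegaBj (x : Fin 4 → ℝ) : Fin 4 → ℝ := fun μ => etaCoef μ * x μ / tau x

/-- The co-rotational map `ψ(x) = (τ/x₄, x₁/x₄, x₂/x₄, x₃/x₄)` into `S³`. -/
def psiHB (x : Fin 4 → ℝ) : Fin 4 → ℝ :=
  ![tau x / x 3, x 0 / x 3, x 1 / x 3, x 2 / x 3]

/-!
Write `ψ = F / x₄` with `F = (τ, x₁, x₂, x₃)` (`psiNum`). In the light cone `τ² = x₄² − |x⃗|²`,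
so `|F| = x₄` and `ψ` takes values in `S³`; moreover `∂_μ τ = −ω_μ`.

Both `F` and `x₄` satisfy Euler's identity `x^α ∂_α f = f` (they are homogeneous of degree one),
so their quotient `ψ` has vanishing radial derivative, and `U = x / τ` is radial.

The identity `F · ∂_μ F = x₄ ∂_μ x₄`, the derivative of `|F|² = x₄²`, cancels the cross terms of
the quotient rule: `Σ_a ∂_μψ^a ∂_νψ^a = x₄⁻² (∂_μF · ∂_νF − ∂_μx₄ ∂_νx₄)`. Since
`∂_μF · ∂_νF = ω_μ ω_ν + δ_μν` on spatial indices and `ω_μ ω_ν` otherwise, this is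
`x₄⁻² (η_μν + ω_μ ω_ν)`.
-/

/-- Inner product of two derivatives of `F / s` when `|F| = s`: `A`, `B` are derivatives of `F`
and `d`, `e` the corresponding derivatives of `s`. -/
lemma sum_quotient_rule_mul {ι : Type*} (t : Finset ι) (F A B : ι → ℝ) {s d e : ℝ} (hs : s ≠ 0)
    (hF : ∑ a ∈ t, F a ^ 2 = s ^ 2) (hA : ∑ a ∈ t, F a * A a = s * d)
    (hB : ∑ a ∈ t, F a * B a = s * e) :
    ∑ a ∈ t, (A a * s - F a * d) / s ^ 2 * ((B a * s - F a * e) / s ^ 2)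
      = (∑ a ∈ t, A a * B a - d * e) / s ^ 2 := by
  have expand : ∀ a, (A a * s - F a * d) / s ^ 2 * ((B a * s - F a * e) / s ^ 2)
      = A a * B a / s ^ 2 - (F a * A a) * e / s ^ 3 - (F a * B a) * d / s ^ 3
        + F a ^ 2 * (d * e) / s ^ 4 := by
    intro a; field_simp; ring
  simp only [expand, Finset.sum_add_distrib, Finset.sum_sub_distrib, ← Finset.sum_div,
    ← Finset.sum_mul, hF, hA, hB]
  field_simp
  ring

section PartialDerivatives

variable {f g : (Fin 4 → ℝ) → ℝ} {x : Fin 4 → ℝ}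

lemma pd_coord (μ i : Fin 4) : pd μ (fun y => y i) x = if i = μ then 1 else 0 := by
  simp [pd, (hasFDerivAt_apply i x).fderiv, Pi.single_apply]

lemma pd_div (hf : DifferentiableAt ℝ f x) (hg : DifferentiableAt ℝ g x) (hx : g x ≠ 0)
    (μ : Fin 4) :
    pd μ (fun y => f y / g y) x = (pd μ f x * g x - f x * pd μ g x) / g x ^ 2 := by
  have h := hf.hasFDerivAt.mul ((hasDerivAt_inv hx).comp_hasFDerivAt x hg.hasFDerivAt)
  simp only [Pi.mul_def, Function.comp_def, ← div_eq_mul_inv] at h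
  rw [pd, h.fderiv]
  simp only [pd, add_apply, smul_apply, smul_eq_mul]
  field_simp
  ring

lemma pd_sqrt (hf : DifferentiableAt ℝ f x) (hx : f x ≠ 0) (μ : Fin 4) :
    pd μ (fun y => √(f y)) x = pd μ f x / (2 * √(f x)) := by
  simp only [pd, (hf.hasFDerivAt.sqrt hx).fderiv, smul_apply, smul_eq_mul]
  ring

lemma sum_mul_pd_div_eq_zero (hf : DifferentiableAt ℝ f x) (hg : DifferentiableAt ℝ g x)
    (hx : g x ≠ 0) (hf_euler : ∑ α, x α * pd α f x = f x)
    (hg_euler : ∑ α, x α * pd α g x = g x) :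
    ∑ α, x α * pd α (fun y => f y / g y) x = 0 := by
  have quotient_rule : ∀ α, x α * pd α (fun y => f y / g y) x
      = (g x * (x α * pd α f x) - f x * (x α * pd α g x)) / g x ^ 2 := by
    intro α; rw [pd_div hf hg hx]; ring
  simp only [quotient_rule, ← Finset.sum_div, Finset.sum_sub_distrib, ← Finset.mul_sum,
    hf_euler, hg_euler]
  ring

end PartialDerivatives

section Lightcone

variable {x : Fin 4 → ℝ}

lemma time_pos_of_mem_lightcone (hx : x ∈ lightcone) : 0 < x 3 :=
  (Real.sqrt_nonneg _).trans_lt hx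

lemma interval_pos_of_mem_lightcone (hx : x ∈ lightcone) :
    0 < x 3 ^ 2 - x 0 ^ 2 - x 1 ^ 2 - x 2 ^ 2 := by
  have := (Real.sqrt_lt' (time_pos_of_mem_lightcone hx)).1 hx
  linarith

lemma tau_sq (hx : x ∈ lightcone) : tau x ^ 2 = x 3 ^ 2 - x 0 ^ 2 - x 1 ^ 2 - x 2 ^ 2 :=
  Real.sq_sqrt (interval_pos_of_mem_lightcone hx).le

lemma differentiableAt_tau (hx : x ∈ lightcone) : DifferentiableAt ℝ tau x :=
  DifferentiableAt.sqrt (by fun_prop) (interval_pos_of_mem_lightcone hx).ne'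

lemma pd_tau (hx : x ∈ lightcone) (μ : Fin 4) : pd μ tau x = -omegaBj x μ := by
  have pd_interval :
      pd μ (fun y => y 3 ^ 2 - y 0 ^ 2 - y 1 ^ 2 - y 2 ^ 2) x = -2 * etaCoef μ * x μ := by
    simp (disch := fun_prop) only [pd, fderiv_fun_sub, fderiv_fun_pow,
      (hasFDerivAt_apply _ x).fderiv]
    fin_cases μ <;> simp [etaCoef]
  rw [show tau = fun y => √(y 3 ^ 2 - y 0 ^ 2 - y 1 ^ 2 - y 2 ^ 2) from rfl,
    pd_sqrt (by fun_prop) (interval_pos_of_mem_lightcone hx).ne', pd_interval]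
  simp only [omegaBj, tau]
  field_simp

lemma sum_mul_pd_tau (hx : x ∈ lightcone) : ∑ α, x α * pd α tau x = tau x := by
  have hτ := (tau_pos hx).ne'
  simp only [pd_tau hx, omegaBj, etaCoef, Fin.sum_univ_four, Fin.reduceEq, ↓reduceIte]
  field_simp
  rw [tau_sq hx]
  ring

end Lightcone

def psiNum (x : Fin 4 → ℝ) : Fin 4 → ℝ := ![tau x, x 0, x 1, x 2]

section PsiNum

variable {x : Fin 4 → ℝ}

lemma psiHB_eq_div (y : Fin 4 → ℝ) (a : Fin 4) : psiHB y a = psiNum y a / y 3 := by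
  fin_cases a <;> rfl

lemma differentiableAt_psiNum (hx : x ∈ lightcone) (a : Fin 4) :
    DifferentiableAt ℝ (fun y => psiNum y a) x := by
  fin_cases a
  · exact differentiableAt_tau hx
  all_goals exact (hasFDerivAt_apply _ x).differentiableAt

lemma sum_psiNum_sq (hx : x ∈ lightcone) : ∑ a, psiNum x a ^ 2 = x 3 ^ 2 := by
  simp only [psiNum, Fin.sum_univ_four, Matrix.cons_val, tau_sq hx]
  ring

lemma sum_mul_pd_psiNum (hx : x ∈ lightcone) (a : Fin 4) :
    ∑ α, x α * pd α (fun y => psiNum y a) x = psiNum x a := by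
  fin_cases a
  · exact sum_mul_pd_tau hx
  all_goals simp [psiNum, pd_coord]

lemma sum_psiNum_mul_pd (hx : x ∈ lightcone) (μ : Fin 4) :
    ∑ a, psiNum x a * pd μ (fun y => psiNum y a) x = x 3 * pd μ (fun y => y 3) x := by
  have hτ := (tau_pos hx).ne'
  simp only [Fin.sum_univ_four, psiNum, Matrix.cons_val, pd_tau hx, pd_coord, omegaBj]
  fin_cases μ <;> simp [etaCoef, mul_div_cancel₀ _ hτ]

lemma sum_pd_psiNum_mul (hx : x ∈ lightcone) (μ ν : Fin 4) :
    ∑ a, pd μ (fun y => psiNum y a) x * pd ν (fun y => psiNum y a) x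
      = omegaBj x μ * omegaBj x ν + etaMat μ ν + pd μ (fun y => y 3) x * pd ν (fun y => y 3) x := by
  simp only [Fin.sum_univ_four, psiNum, Matrix.cons_val, pd_tau hx, pd_coord]
  fin_cases μ <;> fin_cases ν <;> simp [etaMat, etaCoef]

end PsiNum

section PsiHB

variable {x : Fin 4 → ℝ}

lemma pd_psiHB (hx : x ∈ lightcone) (a μ : Fin 4) :
    pd μ (fun y => psiHB y a) x
      = (pd μ (fun y => psiNum y a) x * x 3 - psiNum x a * pd μ (fun y => y 3) x) / x 3 ^ 2 := by
  simp only [psiHB_eq_div]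
  exact pd_div (differentiableAt_psiNum hx a) (differentiableAt_apply 3 x)
    (time_pos_of_mem_lightcone hx).ne' μ

lemma sum_psiHB_sq (hx : x ∈ lightcone) : ∑ a, psiHB x a ^ 2 = 1 := by
  simp only [psiHB_eq_div, div_pow, ← Finset.sum_div, sum_psiNum_sq hx]
  exact div_self (pow_ne_zero 2 (time_pos_of_mem_lightcone hx).ne')

lemma sum_Ubj_mul_pd_psiHB (hx : x ∈ lightcone) (a : Fin 4) :
    ∑ α, Ubj x α * pd α (fun y => psiHB y a) x = 0 := by
  have radial_pd_time : ∑ α, x α * pd α (fun y => y 3) x = x 3 := by simp [pd_coord]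
  have radial_pd_psiHB : ∑ α, x α * pd α (fun y => psiHB y a) x = 0 := by
    simp only [psiHB_eq_div]
    exact sum_mul_pd_div_eq_zero (differentiableAt_psiNum hx a) (differentiableAt_apply 3 x)
      (time_pos_of_mem_lightcone hx).ne' (sum_mul_pd_psiNum hx a) radial_pd_time
  simp only [Ubj, div_mul_eq_mul_div, ← Finset.sum_div, radial_pd_psiHB, zero_div]

lemma sum_pd_psiHB_mul (hx : x ∈ lightcone) (μ ν : Fin 4) :
    ∑ a, pd μ (fun y => psiHB y a) x * pd ν (fun y => psiHB y a) x
      = ((x 3) ^ 2)⁻¹ * (etaMat μ ν + omegaBj x μ * omegaBj x ν) := by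
  simp only [pd_psiHB hx]
  rw [sum_quotient_rule_mul _ _ _ _ (time_pos_of_mem_lightcone hx).ne' (sum_psiNum_sq hx)
    (sum_psiNum_mul_pd hx μ) (sum_psiNum_mul_pd hx ν), sum_pd_psiNum_mul hx]
  ring

end PsiHB

/-- `ψ` takes values in the unit sphere `S³`, the radial field
`U = x/τ` is vertical for `ψ`, and `ψ` is horizontally conformal with square
dilation `λ² = x₄^{−2}`. -/
theorem statement19 :
    ∀ x ∈ lightcone,
      (∑ a, psiHB x a ^ 2 = 1) ∧
      (∀ a : Fin 4, ∑ α, Ubj x α * pd α (fun y => psiHB y a) x = 0) ∧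
      (∀ μ ν : Fin 4,
        ∑ a, pd μ (fun y => psiHB y a) x * pd ν (fun y => psiHB y a) x
          = ((x 3) ^ 2)⁻¹ * (etaMat μ ν + omegaBj x μ * omegaBj x ν)) := by
  intro x hx
  exact ⟨sum_psiHB_sq hx, sum_Ubj_mul_pd_psiHB hx, sum_pd_psiHB_mul hx⟩
end
end
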